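/- There is an algebra homomorphism φ_ε from the specialized type B Hecke algebra H_{1,q}(B_n) to TL(B_n)_ε sending s₀ ↦ s₀ and H_i ↦ U_i + εq^{-ε}; i.e., the elements s₀ and U_i + εq^{-ε} of TL(B_n)_ε satisfy the type B Hecke relations. -/

import Mathlib

/-! There is an algebra homomorphism from the specialized type `B` Hecke
algebra `H_{1,q}(B)` to `TL(B)_ε` sending `s₀ ↦ s₀` and `H_i ↦ U_i + ε q^{-ε}`. -/

noncomputable section

abbrev Kq : Type := RatFunc ℂ

def qq : Kq := RatFunc.X

/-- The quantum integer `[m] = (q^m - q^{-m})/(q - q⁻¹)` in `ℂ(q)`. -/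
def qint (m : ℤ) : Kq := (qq ^ m - qq ^ (-m)) / (qq - qq⁻¹)

/-- Generators of the type `B` Temperley–Lieb algebra: `none` is `s₀`, and
`some i` is the cup-cap generator `U_{i+1}`. -/
def g : Option ℕ → FreeAlgebra Kq (Option ℕ) := FreeAlgebra.ι Kq

/-- The defining relations of the (specialized) type `B` Temperley–Lieb
algebra (on infinitely many strands, so that `TL(B_n)` sits inside for
every `n`): `U_i² = -ε(q+q⁻¹)U_i`, distant commutativity,
`U_i U_{i±1} U_i = U_i`, `s₀² = 1`, `U₁ s₀ U₁ = 0` and `s₀ U_i = U_i s₀`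
for `i ≥ 2`.  (Recall `some i` stands for `U_{i+1}`.) -/
inductive TLBRel (ε : Kq) : FreeAlgebra Kq (Option ℕ) → FreeAlgebra Kq (Option ℕ) → Prop
  | Usq (i : ℕ) :
      TLBRel ε (g (some i) * g (some i)) ((-(ε * (qq + qq⁻¹))) • g (some i))
  | Ucomm (i j : ℕ) (h : i + 2 ≤ j) :
      TLBRel ε (g (some i) * g (some j)) (g (some j) * g (some i))
  | Ubraid1 (i : ℕ) :
      TLBRel ε (g (some i) * g (some (i+1)) * g (some i)) (g (some i))
  | Ubraid2 (i : ℕ) :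
      TLBRel ε (g (some (i+1)) * g (some i) * g (some (i+1))) (g (some (i+1)))
  | s0sq : TLBRel ε (g none * g none) 1
  | UsU : TLBRel ε (g (some 0) * g none * g (some 0)) 0
  | scomm (i : ℕ) (h : 1 ≤ i) :
      TLBRel ε (g none * g (some i)) (g (some i) * g none)

/-- The (specialized) type `B` Temperley–Lieb algebra `TL(B)_ε` (on
infinitely many strands). -/
abbrev TLB (ε : Kq) := RingQuot (TLBRel ε)

/-- The generator `s₀` of `TL(B)_ε`. -/
def s0 (ε : Kq) : TLB ε := RingQuot.mkAlgHom Kq (TLBRel ε) (g none)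

/-- The generator `U_i` of `TL(B)_ε`, for `i ≥ 1`. -/
def UU (ε : Kq) (i : ℕ) : TLB ε := RingQuot.mkAlgHom Kq (TLBRel ε) (g (some (i - 1)))

/-- The subalgebra `TL(B_n)_ε ⊆ TL(B)_ε`, generated by `s₀, U₁, …, U_{n-1}`. -/
def TLBsub (ε : Kq) (n : ℕ) : Subalgebra Kq (TLB ε) :=
  Algebra.adjoin Kq ({s0 ε} ∪ {x | ∃ i, 1 ≤ i ∧ i ≤ n - 1 ∧ x = UU ε i})

/-- The type `D` generators: `UD 0 = U₀ = s₀U₁s₀` and `UD i = U_i` for `i ≥ 1`. -/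
def UD (ε : Kq) (i : ℕ) : TLB ε :=
  if i = 0 then s0 ε * UU ε 1 * s0 ε else UU ε i

/-- The subalgebra `TL(D_n)_ε ⊆ TL(B)_ε`, generated by `U₀, U₁, …, U_{n-1}`. -/
def TLDsub (ε : Kq) (n : ℕ) : Subalgebra Kq (TLB ε) :=
  Algebra.adjoin Kq {x | ∃ i ≤ n - 1, x = UD ε i}

/-- The type `B_n` Jones–Wenzl projectors `b_{n,η,ε}` (for `η = ±1`), defined by
`b_{1,η,ε} = (1 + η s₀)/2` and the recursion
`b_{n+1,η,ε} = b_{n,η,ε} + ε (q^{n-1}+q^{-(n-1)})/(q^n+q^{-n}) · b_{n,η,ε} U_n b_{n,η,ε}`. -/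
def bB (ε η : Kq) : ℕ → TLB ε
  | 0 => 1
  | 1 => (2 : Kq)⁻¹ • (1 + η • s0 ε)
  | (n+2) =>
      bB ε η (n+1) +
        (ε * (qq ^ n + qq⁻¹ ^ n) / (qq ^ (n+1) + qq⁻¹ ^ (n+1))) •
          (bB ε η (n+1) * UU ε (n+1) * bB ε η (n+1))

/-- The type `D_n` Jones–Wenzl projector `d_{n,ε} = b_{n,+,ε} + b_{n,-,ε}`. -/
def dD (ε : Kq) (n : ℕ) : TLB ε := bB ε 1 n + bB ε (-1) n

/-- The defining relations of the specialized type `B` Hecke algebra: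
`H_i² = 1 + (q⁻¹-q)H_i`, braid relations, distant commutativity, `s₀² = 1`,
`s₀H₁s₀H₁ = H₁s₀H₁s₀`, and `s₀H_i = H_is₀` for `i ≥ 2`.
(`none` is `s₀`, `some i` is `H_{i+1}`.) -/
inductive HeckeRel : FreeAlgebra Kq (Option ℕ) → FreeAlgebra Kq (Option ℕ) → Prop
  | Hsq (i : ℕ) :
      HeckeRel (g (some i) * g (some i)) (1 + (qq⁻¹ - qq) • g (some i))
  | Hbraid (i : ℕ) :
      HeckeRel (g (some i) * g (some (i+1)) * g (some i))
        (g (some (i+1)) * g (some i) * g (some (i+1)))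
  | Hcomm (i j : ℕ) (h : i + 2 ≤ j) :
      HeckeRel (g (some i) * g (some j)) (g (some j) * g (some i))
  | s0sq : HeckeRel (g none * g none) 1
  | refl :
      HeckeRel (g none * g (some 0) * g none * g (some 0))
        (g (some 0) * g none * g (some 0) * g none)
  | scomm (i : ℕ) (h : 1 ≤ i) :
      HeckeRel (g none * g (some i)) (g (some i) * g none)

/-- The specialized type `B` Hecke algebra `H_{1,q}(B)`. -/
abbrev Hecke := RingQuot HeckeRel

/-- The generator `s₀` of the Hecke algebra. -/
def sH : Hecke := RingQuot.mkAlgHom Kq HeckeRel (g none)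

/-- The generator `H_i` of the Hecke algebra, for `i ≥ 1`. -/
def HH (i : ℕ) : Hecke := RingQuot.mkAlgHom Kq HeckeRel (g (some (i - 1)))

/-! The shift `c = ε q^{-ε}` is a root of `X² - δX + 1`, where `δ = ε(q + q⁻¹)` is the loop
value, and `2c - δ = q⁻¹ - q`. For any `u` with `u² = -δu` this gives the Hecke quadratic relation
`(u + c)² = 1 + (2c - δ)(u + c)`. Expanding the braid words in `u + c` and `v + c` with
`uvu = u`, `vuv = v`, the two sides differ by `(c² - δc + 1)(u - v) = 0`; and with `s² = 1`,
`usu = 0` both sides of the reflection relation for `s` and `u + c` equal `c(sus + u) + c²`. -/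

section ShiftedTemperleyLieb

variable {R A : Type} [CommRing R] [Ring A] [Algebra R A]

theorem hecke_quadratic_of_tl {u : A} {δ c : R} (hu : u * u = -δ • u)
    (hc : c * c - δ * c + 1 = 0) :
    (u + algebraMap R A c) * (u + algebraMap R A c)
      = 1 + (2 * c - δ) • (u + algebraMap R A c) := by
  rw [Algebra.algebraMap_eq_smul_one]
  simp only [mul_add, add_mul, smul_mul_assoc, mul_smul_comm, one_mul, mul_one, smul_smul,
    smul_add, hu]
  match_scalars <;> grind

theorem hecke_braid_of_tl {u v : A} {δ c : R} (hu : u * u = -δ • u) (hv : v * v = -δ • v)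
    (huvu : u * (v * u) = u) (hvuv : v * (u * v) = v) (hc : c * c - δ * c + 1 = 0) :
    (u + algebraMap R A c) * (v + algebraMap R A c) * (u + algebraMap R A c)
      = (v + algebraMap R A c) * (u + algebraMap R A c) * (v + algebraMap R A c) := by
  rw [Algebra.algebraMap_eq_smul_one]
  simp only [mul_add, add_mul, smul_mul_assoc, mul_smul_comm, one_mul, mul_one, smul_smul,
    smul_add, mul_assoc]
  rw [huvu, hvuv, hu, hv]
  match_scalars <;> grind

theorem hecke_reflection_of_tl {s u : A} (c : R) (hs : s * s = 1) (husu : u * (s * u) = 0) :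
    s * (u + algebraMap R A c) * s * (u + algebraMap R A c)
      = (u + algebraMap R A c) * s * (u + algebraMap R A c) * s := by
  have hsusu : s * (u * (s * u)) = 0 := by rw [husu, mul_zero]
  have husus : u * (s * (u * s)) = 0 := by
    rw [← mul_assoc s u s, ← mul_assoc, husu, zero_mul]
  have hssu : s * (s * u) = u := by rw [← mul_assoc, hs, one_mul]
  have huss : u * (s * s) = u := by rw [hs, mul_one]
  rw [Algebra.algebraMap_eq_smul_one]
  simp only [mul_add, add_mul, smul_mul_assoc, mul_smul_comm, one_mul, mul_one, mul_assoc]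
  rw [hsusu, husus, hssu, huss, hs]
  match_scalars <;> ring

end ShiftedTemperleyLieb

section Relations

variable (ε : Kq)

theorem UU_succ (i : ℕ) : UU ε (i + 1) = RingQuot.mkAlgHom Kq (TLBRel ε) (g (some i)) := rfl

theorem s0_mul_self : s0 ε * s0 ε = 1 := by
  simpa [s0] using RingQuot.mkAlgHom_rel Kq (TLBRel.s0sq (ε := ε))

theorem UU_succ_mul_self (i : ℕ) :
    UU ε (i + 1) * UU ε (i + 1) = -(ε * (qq + qq⁻¹)) • UU ε (i + 1) := by
  simpa only [UU_succ, map_mul, map_smul] using RingQuot.mkAlgHom_rel Kq (TLBRel.Usq (ε := ε) i)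

theorem commute_UU_succ {i j : ℕ} (h : i + 2 ≤ j) : Commute (UU ε (i + 1)) (UU ε (j + 1)) := by
  rw [commute_iff_eq]
  simpa [UU_succ] using RingQuot.mkAlgHom_rel Kq (TLBRel.Ucomm (ε := ε) i j h)

theorem UU_mul_UU_succ_mul_UU (i : ℕ) :
    UU ε (i + 1) * (UU ε (i + 2) * UU ε (i + 1)) = UU ε (i + 1) := by
  simpa [UU_succ, mul_assoc] using RingQuot.mkAlgHom_rel Kq (TLBRel.Ubraid1 (ε := ε) i)

theorem UU_succ_mul_UU_mul_UU_succ (i : ℕ) :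
    UU ε (i + 2) * (UU ε (i + 1) * UU ε (i + 2)) = UU ε (i + 2) := by
  simpa [UU_succ, mul_assoc] using RingQuot.mkAlgHom_rel Kq (TLBRel.Ubraid2 (ε := ε) i)

theorem UU_one_mul_s0_mul_UU_one : UU ε 1 * (s0 ε * UU ε 1) = 0 := by
  simpa [UU_succ, s0, mul_assoc] using RingQuot.mkAlgHom_rel Kq (TLBRel.UsU (ε := ε))

theorem commute_s0_UU {i : ℕ} (h : 2 ≤ i) : Commute (s0 ε) (UU ε i) := by
  obtain ⟨j, rfl⟩ := Nat.exists_eq_add_of_le' h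
  rw [commute_iff_eq]
  simpa [UU_succ, s0] using RingQuot.mkAlgHom_rel Kq (TLBRel.scomm (ε := ε) (j + 1) (by omega))

end Relations

section Shift

variable {ε : ℤ}

theorem shift_mul_self_sub_add_one (hε : ε = 1 ∨ ε = -1) :
    ((ε : Kq) * qq ^ (-ε)) * ((ε : Kq) * qq ^ (-ε))
      - (ε : Kq) * (qq + qq⁻¹) * ((ε : Kq) * qq ^ (-ε)) + 1 = 0 := by
  have hq : (qq : Kq) ≠ 0 := RatFunc.X_ne_zero
  rcases hε with rfl | rfl <;> · norm_num; field_simp; ring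

theorem two_mul_shift_sub (hε : ε = 1 ∨ ε = -1) :
    2 * ((ε : Kq) * qq ^ (-ε)) - (ε : Kq) * (qq + qq⁻¹) = qq⁻¹ - qq := by
  have hq : (qq : Kq) ≠ 0 := RatFunc.X_ne_zero
  rcases hε with rfl | rfl <;> · norm_num; field_simp; ring

end Shift

section HeckeToTLB

variable (ε : Kq) {c : Kq}

def heckeGenToTLB (c : Kq) : Option ℕ → TLB ε
  | none => s0 ε
  | some i => UU ε (i + 1) + algebraMap Kq (TLB ε) c

theorem lift_heckeGenToTLB_of_heckeRel (hc : c * c - ε * (qq + qq⁻¹) * c + 1 = 0)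
    (hd : 2 * c - ε * (qq + qq⁻¹) = qq⁻¹ - qq) {a b : FreeAlgebra Kq (Option ℕ)}
    (h : HeckeRel a b) :
    FreeAlgebra.lift Kq (heckeGenToTLB ε c) a = FreeAlgebra.lift Kq (heckeGenToTLB ε c) b := by
  induction h <;>
    simp only [map_mul, map_add, map_one, map_smul, g, FreeAlgebra.lift_ι_apply, heckeGenToTLB]
  case Hsq i =>
    rw [← hd]
    exact hecke_quadratic_of_tl (UU_succ_mul_self ε i) hc
  case Hbraid i =>
    exact hecke_braid_of_tl (UU_succ_mul_self ε i) (UU_succ_mul_self ε (i + 1))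
      (UU_mul_UU_succ_mul_UU ε i) (UU_succ_mul_UU_mul_UU_succ ε i) hc
  case Hcomm i j hij =>
    exact ((commute_UU_succ ε hij).add_right (Algebra.commute_algebraMap_right _ _)).add_left
      (Algebra.commute_algebraMap_left _ _)
  case s0sq => exact s0_mul_self ε
  case refl => exact hecke_reflection_of_tl c (s0_mul_self ε) (UU_one_mul_s0_mul_UU_one ε)
  case scomm i hi =>
    exact (commute_s0_UU ε (by omega)).add_right (Algebra.commute_algebraMap_right _ _)

def heckeToTLB (hc : c * c - ε * (qq + qq⁻¹) * c + 1 = 0)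
    (hd : 2 * c - ε * (qq + qq⁻¹) = qq⁻¹ - qq) : Hecke →ₐ[Kq] TLB ε :=
  RingQuot.liftAlgHom Kq
    ⟨FreeAlgebra.lift Kq (heckeGenToTLB ε c), fun _ _ ↦ lift_heckeGenToTLB_of_heckeRel ε hc hd⟩

variable (hc : c * c - ε * (qq + qq⁻¹) * c + 1 = 0) (hd : 2 * c - ε * (qq + qq⁻¹) = qq⁻¹ - qq)

theorem heckeToTLB_sH : heckeToTLB ε hc hd sH = s0 ε := by
  simp [heckeToTLB, sH, g, heckeGenToTLB]

theorem heckeToTLB_HH {i : ℕ} (hi : 1 ≤ i) :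
    heckeToTLB ε hc hd (HH i) = UU ε i + algebraMap Kq (TLB ε) c := by
  simp [heckeToTLB, HH, g, heckeGenToTLB, Nat.sub_add_cancel hi]

end HeckeToTLB

theorem stmt9 (ε : ℤ) (hε : ε = 1 ∨ ε = -1) :
    ∃ φ : Hecke →ₐ[Kq] TLB (ε : Kq),
      φ sH = s0 (ε : Kq) ∧
      ∀ i : ℕ, 1 ≤ i →
        φ (HH i) = UU (ε : Kq) i
          + algebraMap Kq (TLB (ε : Kq)) ((ε : Kq) * qq ^ (-ε)) := by
  have hc := shift_mul_self_sub_add_one hε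
  have hd := two_mul_shift_sub hε
  exact ⟨heckeToTLB _ hc hd, heckeToTLB_sH _ hc hd, fun _ ↦ heckeToTLB_HH _ hc hd⟩

end
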